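/- arXiv:2406.03682 — 4 statements merged into one kernel-verified Lean document; each statement's English description precedes it below -/
import Mathlib

section
/- Let d ≥ 1 and let A ⊆ ℝ^d be a compact set. For every continuous function S : A → ℝ there exist a positive integer m ≤ d, continuous functions φ : ℝ^m → ℝ and ψ₁, …, ψ_m : ℝ → ℝ, and Borel probability measures μ₁, …, μ_m on ℝ^d such that for every real symmetric d×d matrix H whose eigenvalues λ₁(H) ≥ λ₂(H) ≥ … ≥ λ_d(H) (listed with multiplicity in nonincreasing order) form a vector lying in A, one has S(λ₁(H), …, λ_d(H)) = φ( ∫ ψ₁(½ vᵀHv) dμ₁(v), …, ∫ ψ_m(½ vᵀHv) dμ_m(v) ). -/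
open MeasureTheory Matrix Real Polynomial
open scoped ENNReal NNReal


noncomputable def gaussDens (d : ℕ) : (Fin d → ℝ) → ℝ :=
  fun v => ∏ i, ((Real.sqrt (2*Real.pi))⁻¹ * Real.exp (-(1/2) * (v i)^2))

lemma gauss1d {b : ℝ} (hb : 0 < b) :
    ∫ x : ℝ, (Real.sqrt (2*Real.pi))⁻¹ * Real.exp (-b * x^2) = (Real.sqrt (2*b))⁻¹ := by
  rw [MeasureTheory.integral_const_mul, integral_gaussian]
  have hπ : (0:ℝ) < Real.pi := Real.pi_pos
  rw [Real.sqrt_div hπ.le, Real.sqrt_mul (by norm_num : (0:ℝ) ≤ 2),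
    Real.sqrt_mul (by norm_num : (0:ℝ) ≤ 2)]
  have h2 : Real.sqrt 2 ≠ 0 := by positivity
  have hπ' : Real.sqrt Real.pi ≠ 0 := by positivity
  have hb' : Real.sqrt b ≠ 0 := by positivity
  field_simp

lemma gauss1d_integrable {b : ℝ} (hb : 0 < b) :
    Integrable (fun x : ℝ => (Real.sqrt (2*Real.pi))⁻¹ * Real.exp (-b * x^2)) := by
  exact (integrable_exp_neg_mul_sq hb).const_mul _

noncomputable def gaussMeasure (d : ℕ) : Measure (Fin d → ℝ) :=
  volume.withDensity fun v => ((gaussDens d v).toNNReal : ℝ≥0∞)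

lemma gaussDens_nonneg (d : ℕ) (v : Fin d → ℝ) : 0 ≤ gaussDens d v := by
  unfold gaussDens; positivity

lemma gaussDens_continuous (d : ℕ) : Continuous (gaussDens d) := by
  unfold gaussDens
  exact continuous_finset_prod _ fun i _ => by fun_prop

lemma gaussDens_integrable (d : ℕ) : Integrable (gaussDens d) := by
  unfold gaussDens
  exact Integrable.fintype_prod (E := ℝ) (f := fun _ x => (Real.sqrt (2*Real.pi))⁻¹ * Real.exp (-(1/2) * x^2))
    (fun i => gauss1d_integrable (by norm_num))

lemma integral_gaussDens (d : ℕ) : ∫ v, gaussDens d v = 1 := by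
  unfold gaussDens
  rw [MeasureTheory.volume_pi, integral_fintype_prod_eq_prod (𝕜 := ℝ) (ι := Fin d)
    (f := fun _ x => (Real.sqrt (2*Real.pi))⁻¹ * Real.exp (-(1/2) * x^2))]
  have h1 : (∫ x : ℝ, (Real.sqrt (2*Real.pi))⁻¹ * Real.exp (-(1/2) * x^2)) = 1 := by
    rw [gauss1d (by norm_num : (0:ℝ) < 1/2)]
    norm_num
  rw [Finset.prod_congr rfl fun i _ => h1, Finset.prod_const_one]

instance gaussMeasure_prob (d : ℕ) : IsProbabilityMeasure (gaussMeasure d) := by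
  constructor
  rw [gaussMeasure, withDensity_apply _ MeasurableSet.univ, Measure.restrict_univ]
  have : ∀ v, ((gaussDens d v).toNNReal : ℝ≥0∞) = ENNReal.ofReal (gaussDens d v) := fun v => rfl
  simp_rw [this]
  rw [← ofReal_integral_eq_lintegral_ofReal (gaussDens_integrable d)
    (Filter.Eventually.of_forall (gaussDens_nonneg d)), integral_gaussDens]
  norm_num

lemma integral_gaussMeasure (d : ℕ) (g : (Fin d → ℝ) → ℝ) :
    ∫ v, g v ∂(gaussMeasure d) = ∫ v, gaussDens d v * g v := by
  rw [gaussMeasure, integral_withDensity_eq_integral_smul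
    ((gaussDens_continuous d).measurable.real_toNNReal)]
  congr 1; funext v
  simp [NNReal.smul_def, Real.coe_toNNReal _ (gaussDens_nonneg d v)]

lemma prod_gauss_form (d : ℕ) (a w : Fin d → ℝ) :
    ∏ i, ((Real.sqrt (2*Real.pi))⁻¹ * Real.exp (a i * (w i)^2))
      = (Real.sqrt (2*Real.pi))⁻¹^d * Real.exp (∑ i, a i * (w i)^2) := by
  rw [Finset.prod_mul_distrib, Finset.prod_const, Real.exp_sum, Finset.card_univ,
    Fintype.card_fin]

lemma gauss_integral_exp_quadratic (d : ℕ) (H : Matrix (Fin d) (Fin d) ℝ) (hH : H.IsHermitian)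
    (t : ℝ) (hpos : ∀ i, 0 < t * hH.eigenvalues i + 1/2) :
    ∫ v, Real.exp (-(t * (v ⬝ᵥ H.mulVec v))) ∂(gaussMeasure d) =
      ∏ i, (Real.sqrt (1 + 2 * t * hH.eigenvalues i))⁻¹ := by
  classical
  set e : Fin d → ℝ := hH.eigenvalues with he
  set U : Matrix (Fin d) (Fin d) ℝ := (hH.eigenvectorUnitary : Matrix (Fin d) (Fin d) ℝ) with hUdef
  have hUmem : U ∈ Matrix.unitaryGroup (Fin d) ℝ := hH.eigenvectorUnitary.2
  have hstar : star U = Uᵀ := by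
    rw [Matrix.star_eq_conjTranspose, Matrix.conjTranspose_eq_transpose_of_trivial]
  have hU2 : U * Uᵀ = 1 := by rw [← hstar]; exact Matrix.mem_unitaryGroup_iff.mp hUmem
  set L : (Fin d → ℝ) → (Fin d → ℝ) := fun v => Uᵀ.mulVec v with hL
  -- quadratic form identity
  have hq : ∀ v : Fin d → ℝ, v ⬝ᵥ H.mulVec v = ∑ i, e i * (L v i)^2 := by
    intro v
    conv_lhs => rw [hH.spectral_theorem]
    rw [Unitary.conjStarAlgAut_apply, ← hUdef, RCLike.ofReal_real_eq_id, hstar, ← he]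
    rw [← Matrix.mulVec_mulVec, ← Matrix.mulVec_mulVec, Matrix.dotProduct_mulVec,
      ← Matrix.mulVec_transpose]
    simp only [Function.comp_id, Function.id_comp, hL, dotProduct, Matrix.mulVec_diagonal]
    exact Finset.sum_congr rfl fun i _ => by ring
  -- norm identity
  have hsq : ∀ v : Fin d → ℝ, ∑ i, (v i)^2 = ∑ i, (L v i)^2 := by
    intro v
    have h1 : ∀ w : Fin d → ℝ, w ⬝ᵥ w = ∑ i, (w i)^2 := by
      intro w; simp [dotProduct, sq]
    rw [← h1, ← h1, hL]
    simp only []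
    rw [Matrix.dotProduct_mulVec, ← Matrix.mulVec_transpose, Matrix.transpose_transpose,
      Matrix.mulVec_mulVec, hU2, Matrix.one_mulVec]
  -- determinant
  have hdet : Uᵀ.det ≠ 0 := by
    rw [Matrix.det_transpose]
    intro h0
    have := congrArg Matrix.det hU2
    rw [Matrix.det_mul, Matrix.det_transpose, Matrix.det_one, h0] at this
    norm_num at this
  have habs : |Uᵀ.det| = 1 := by
    have := congrArg Matrix.det hU2
    rw [Matrix.det_mul, Matrix.det_transpose, Matrix.det_one] at this
    rw [Matrix.det_transpose]
    nlinarith [abs_nonneg U.det, sq_abs U.det]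
  have hmap : Measure.map (Matrix.toLin' Uᵀ) volume = volume := by
    rw [Real.map_matrix_volume_pi_eq_smul_volume_pi hdet]
    rw [abs_inv, habs]
    norm_num
  set G : (Fin d → ℝ) → ℝ :=
    fun w => ∏ i, ((Real.sqrt (2*Real.pi))⁻¹ * Real.exp (-(t * e i + 1/2) * (w i)^2)) with hG
  have hGc : Continuous G := by
    apply continuous_finset_prod
    intro i _
    fun_prop
  have hLc : Continuous (Matrix.toLin' Uᵀ) := LinearMap.continuous_on_pi _
  -- pointwise identity
  have hpt : ∀ v, gaussDens d v * Real.exp (-(t * (v ⬝ᵥ H.mulVec v))) = G (L v) := by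
    intro v
    simp only [hG, gaussDens]
    rw [hq v, prod_gauss_form, prod_gauss_form, mul_assoc, ← Real.exp_add]
    congr 1
    have h1 : ∑ i, -(1/2) * (v i)^2 = ∑ i, -(1/2) * (L v i)^2 := by
      rw [← Finset.mul_sum, ← Finset.mul_sum, hsq v]
    rw [h1, Finset.mul_sum, ← Finset.sum_neg_distrib, ← Finset.sum_add_distrib]
    congr 1
    exact Finset.sum_congr rfl fun i _ => by ring
  calc ∫ v, Real.exp (-(t * (v ⬝ᵥ H.mulVec v))) ∂(gaussMeasure d)
      = ∫ v, gaussDens d v * Real.exp (-(t * (v ⬝ᵥ H.mulVec v))) :=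
        integral_gaussMeasure d _
    _ = ∫ v, G (Matrix.toLin' Uᵀ v) := by
        refine integral_congr_ae (Filter.Eventually.of_forall fun v => ?_)
        simp only [Matrix.toLin'_apply]
        exact hpt v
    _ = ∫ w, G w := by
        have h := MeasureTheory.integral_map (φ := Matrix.toLin' Uᵀ) (μ := volume)
          hLc.measurable.aemeasurable (f := G)
          (by rw [hmap]; exact hGc.aestronglyMeasurable)
        rw [hmap] at h
        exact h.symm
    _ = ∏ i, ∫ x : ℝ, (Real.sqrt (2*Real.pi))⁻¹ * Real.exp (-(t * e i + 1/2) * x^2) := by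
        rw [hG]
        exact integral_fintype_prod_eq_prod (𝕜 := ℝ) (ι := Fin d)
          (f := fun i x => (Real.sqrt (2*Real.pi))⁻¹ * Real.exp (-(t * e i + 1/2) * x^2))
    _ = ∏ i, (Real.sqrt (1 + 2 * t * e i))⁻¹ := by
        refine Finset.prod_congr rfl fun i _ => ?_
        rw [gauss1d (hpos i)]
        congr 2
        ring

lemma antitone_eq_of_interp (d : ℕ) {c : ℝ} (hc : 0 < c) (lam lam' : Fin d → ℝ)
    (h1 : Antitone lam) (h2 : Antitone lam')
    (h : ∀ j : Fin (d+1), ∏ i, (2 * lam i * ((j:ℕ) * c) + 1)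
        = ∏ i, (2 * lam' i * ((j:ℕ) * c) + 1)) :
    lam = lam' := by
  classical
  set P : Polynomial ℝ := ∏ i : Fin d, (Polynomial.C (2 * lam i) * Polynomial.X + 1) with hP
  set P' : Polynomial ℝ := ∏ i : Fin d, (Polynomial.C (2 * lam' i) * Polynomial.X + 1) with hP'
  have heval : ∀ (f : Fin d → ℝ) (x : ℝ),
      (∏ i : Fin d, (Polynomial.C (2 * f i) * Polynomial.X + 1)).eval x
        = ∏ i, (2 * f i * x + 1) := by
    intro f x
    simp [Polynomial.eval_prod]
  have hdeg : ∀ f : Fin d → ℝ,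
      (∏ i : Fin d, (Polynomial.C (2 * f i) * Polynomial.X + 1)).degree
        < (((Finset.univ : Finset (Fin (d+1))).card : ℕ) : WithBot ℕ) := by
    intro f
    have h1d : ∀ i : Fin d, (Polynomial.C (2 * f i) * Polynomial.X + 1).natDegree ≤ 1 := by
      intro i
      refine le_trans (Polynomial.natDegree_add_le _ _) (max_le ?_ (by simp))
      exact le_trans (Polynomial.natDegree_C_mul_le _ _) (by simp)
    have hn : (∏ i : Fin d, (Polynomial.C (2 * f i) * Polynomial.X + 1)).natDegree ≤ d := by
      refine le_trans (Polynomial.natDegree_prod_le Finset.univ _) ?_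
      have hsum : ∑ i : Fin d, (Polynomial.C (2 * f i) * Polynomial.X + 1).natDegree
          ≤ ∑ _i : Fin d, (1:ℕ) := Finset.sum_le_sum fun i _ => h1d i
      simpa using hsum
    refine lt_of_le_of_lt Polynomial.degree_le_natDegree ?_
    rw [Finset.card_univ, Fintype.card_fin]
    exact_mod_cast Nat.lt_succ_of_le hn
  have hPP' : P = P' := by
    refine Polynomial.eq_of_degrees_lt_of_eval_index_eq (v := fun j : Fin (d+1) => ((j:ℕ):ℝ) * c)
      Finset.univ ?_ (hdeg lam) (hdeg lam') ?_
    · intro a _ b _ hab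
      have : ((a:ℕ):ℝ) = ((b:ℕ):ℝ) := mul_right_cancel₀ hc.ne' hab
      exact Fin.ext (Nat.cast_injective this)
    · intro j _
      rw [heval, heval]
      exact h j
  have hall : ∀ x : ℝ, ∏ i, (2 * lam i * x + 1) = ∏ i, (2 * lam' i * x + 1) := by
    intro x
    rw [← heval, ← heval, ← hP, ← hP', hPP']
  -- now pass to the reversed polynomials
  set Q : Polynomial ℝ := ∏ i : Fin d, (Polynomial.X + Polynomial.C (2 * lam i)) with hQ
  set Q' : Polynomial ℝ := ∏ i : Fin d, (Polynomial.X + Polynomial.C (2 * lam' i)) with hQ'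
  have hQeval : ∀ (f : Fin d → ℝ) (x : ℝ),
      (∏ i : Fin d, (Polynomial.X + Polynomial.C (2 * f i))).eval x = ∏ i, (x + 2 * f i) := by
    intro f x; simp [Polynomial.eval_prod]
  have hQQ' : Q = Q' := by
    refine Polynomial.eq_of_infinite_eval_eq _ _ ?_
    refine Set.Infinite.mono ?_ ((Set.finite_singleton (0:ℝ)).infinite_compl)
    intro x hx
    have hx0 : x ≠ 0 := hx
    have key : ∀ f : Fin d → ℝ, ∏ i, (x + 2 * f i) = (∏ i, (2 * f i * x⁻¹ + 1)) * x^d := by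
      intro f
      have hfac : ∀ i : Fin d, x + 2 * f i = (2 * f i * x⁻¹ + 1) * x := by
        intro i; field_simp; ring
      rw [Finset.prod_congr rfl fun i _ => hfac i, Finset.prod_mul_distrib,
        Finset.prod_const, Finset.card_univ, Fintype.card_fin]
    simp only [Set.mem_setOf_eq, hQ, hQ', hQeval]
    rw [key lam, key lam', hall x⁻¹]
  -- extract multisets of roots
  have hroots : ∀ f : Fin d → ℝ,
      (∏ i : Fin d, (Polynomial.X + Polynomial.C (2 * f i))).roots
        = Finset.univ.val.map fun i => -(2 * f i) := by
    intro f
    have : (∏ i : Fin d, (Polynomial.X + Polynomial.C (2 * f i)))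
        = ((Finset.univ.val.map fun i : Fin d => -(2 * f i)).map
            fun a => Polynomial.X - Polynomial.C a).prod := by
      rw [Multiset.map_map, Finset.prod_eq_multiset_prod]
      congr 1
      exact Multiset.map_congr rfl fun i _ => by
        simp only [Function.comp_apply, map_neg, sub_neg_eq_add]
    rw [this, Polynomial.roots_multiset_prod_X_sub_C]
  have hms : (Finset.univ.val.map fun i => -(2 * lam i))
      = Finset.univ.val.map fun i => -(2 * lam' i) := by
    rw [← hroots, ← hroots, ← hQ, ← hQ', hQQ']
  rw [Fin.univ_val_map, Fin.univ_val_map, Multiset.coe_eq_coe] at hms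
  have hs : ∀ f : Fin d → ℝ, Antitone f → (List.ofFn fun i => -(2 * f i)).Pairwise (· ≤ ·) := by
    intro f hf
    rw [List.pairwise_ofFn]
    intro i j hij
    have := hf hij.le
    simp only [neg_le_neg_iff]
    linarith
  have heq := List.Perm.eq_of_pairwise' (hs lam h1) (hs lam' h2) hms
  have := List.ofFn_injective heq
  funext i
  have := congrFun this i
  simp only [neg_inj] at this
  linarith

set_option maxHeartbeats 2000000 in
/-- **Universality of the (φ,ψ,μ)-sharpness measures for functions of Hessian eigenvalues.**
Let `d ≥ 1` and `A ⊆ ℝ^d` compact.  For every continuous `S : A → ℝ` there exist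
`1 ≤ m ≤ d`, continuous `φ : ℝ^m → ℝ`, continuous `ψ₁, …, ψ_m : ℝ → ℝ` and Borel
probability measures `μ₁, …, μ_m` on `ℝ^d` such that for every real symmetric `d × d`
matrix `H` whose eigenvalues, listed with multiplicity in nonincreasing order, form a
vector `lam ∈ A`, one has `S lam = φ (∫ ψ₁(½ vᵀHv) dμ₁, …, ∫ ψ_m(½ vᵀHv) dμ_m)`. -/
theorem universality_eigenvalue_sharpness
    (d : ℕ) (hd : 1 ≤ d) (A : Set (Fin d → ℝ)) (hA : IsCompact A)
    (S : (Fin d → ℝ) → ℝ) (hS : ContinuousOn S A) :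
    ∃ (m : ℕ), 1 ≤ m ∧ m ≤ d ∧
      ∃ (φ : (Fin m → ℝ) → ℝ) (ψ : Fin m → ℝ → ℝ)
        (μ : Fin m → Measure (Fin d → ℝ)),
        Continuous φ ∧ (∀ ℓ, Continuous (ψ ℓ)) ∧
        (∀ ℓ, IsProbabilityMeasure (μ ℓ)) ∧
        ∀ (H : Matrix (Fin d) (Fin d) ℝ) (hH : H.IsHermitian) (lam : Fin d → ℝ),
          Antitone lam →
          (∃ σ : Equiv.Perm (Fin d), ∀ i, lam i = hH.eigenvalues (σ i)) →
          lam ∈ A →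
          S lam = φ (fun ℓ => ∫ v, ψ ℓ (v ⬝ᵥ H.mulVec v / 2) ∂(μ ℓ)) := by
  classical
  obtain ⟨R0, hR0⟩ := isBounded_iff_forall_norm_le.mp hA.isBounded
  set R : ℝ := max R0 1 with hRdef
  have hR1 : (1:ℝ) ≤ R := le_max_right _ _
  have hRpos : (0:ℝ) < R := lt_of_lt_of_le one_pos hR1
  have hbound : ∀ lam ∈ A, ∀ i, |lam i| ≤ R := by
    intro lam hmem i
    calc |lam i| = ‖lam i‖ := rfl
      _ ≤ ‖lam‖ := norm_le_pi_norm lam i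
      _ ≤ R0 := hR0 lam hmem
      _ ≤ R := le_max_left _ _
  set c : ℝ := (4 * R * (d+1))⁻¹ with hcdef
  have hc : 0 < c := by rw [hcdef]; positivity
  set τ : Fin d → ℝ := fun ℓ => (((ℓ:ℕ):ℝ) + 1) * c with hτ
  have hkey : ∀ (j : ℕ), j ≤ d → ∀ x : ℝ, |x| ≤ R → 0 < (j : ℝ) * c * x + 1/2 := by
    intro j hj x hx
    have h4 : (4 * R * ((d:ℝ)+1)) * c = 1 := by
      rw [hcdef]
      field_simp
    have hjc : (j:ℝ) * c ≤ (d:ℝ) * c := by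
      apply mul_le_mul_of_nonneg_right _ hc.le
      exact_mod_cast hj
    have habs : |(j:ℝ) * c * x| ≤ (d:ℝ) * c * R := by
      rw [abs_mul]
      have h5 : |(j:ℝ)*c| = (j:ℝ)*c := abs_of_nonneg (by positivity)
      rw [h5]
      exact mul_le_mul hjc hx (abs_nonneg x) (by positivity)
    have hdcR : (d:ℝ) * c * R ≤ 1/4 := by
      nlinarith [h4, hRpos, hR1, Nat.cast_nonneg (α := ℝ) d, hc.le,
        mul_nonneg (Nat.cast_nonneg (α := ℝ) d) hc.le]
    have := neg_abs_le ((j:ℝ) * c * x)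
    linarith
  have hτpos : ∀ ℓ : Fin d, ∀ x : ℝ, |x| ≤ R → 0 < τ ℓ * x + 1/2 := by
    intro ℓ x hx
    have h := hkey ((ℓ:ℕ)+1) (Nat.succ_le_of_lt ℓ.isLt) x hx
    have : (((ℓ:ℕ)+1 : ℕ) : ℝ) = ((ℓ:ℕ):ℝ) + 1 := by push_cast; ring
    rw [this] at h
    simpa [hτ] using h
  have h1pos : ∀ ℓ : Fin d, ∀ x : ℝ, |x| ≤ R → 0 < 1 + 2 * τ ℓ * x := by
    intro ℓ x hx
    have := hτpos ℓ x hx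
    linarith
  -- the moment map
  set T : (Fin d → ℝ) → (Fin d → ℝ) :=
    fun lam ℓ => ∏ i, (Real.sqrt (1 + 2 * τ ℓ * lam i))⁻¹ with hT
  set K : Set (Fin d → ℝ) := A ∩ {x | Antitone x} with hK
  have hKclosed : IsClosed {x : Fin d → ℝ | Antitone x} := by
    have : {x : Fin d → ℝ | Antitone x}
        = ⋂ (p : Fin d × Fin d) (_ : p.1 ≤ p.2), {x | x p.2 ≤ x p.1} := by
      ext x
      simp only [Set.mem_setOf_eq, Set.mem_iInter]
      exact ⟨fun hx p hp => hx hp, fun hx i j hij => hx (i, j) hij⟩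
    rw [this]
    exact isClosed_iInter fun p => isClosed_iInter fun _ =>
      isClosed_le (continuous_apply p.2) (continuous_apply p.1)
  have hKcomp : IsCompact K := hA.inter_right hKclosed
  haveI : CompactSpace K := isCompact_iff_compactSpace.mp hKcomp
  -- continuity of T restricted to K
  have hTrc : Continuous (fun x : K => T x.1) := by
    refine continuous_pi fun ℓ => continuous_finset_prod _ fun i _ => Continuous.inv₀ ?_ ?_
    · exact Real.continuous_sqrt.comp (continuous_const.add (continuous_const.mul
        ((continuous_apply i).comp continuous_subtype_val)))
    · intro x
      exact ne_of_gt (Real.sqrt_pos.mpr (h1pos ℓ (x.1 i) (hbound x.1 x.2.1 i)))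
  -- injectivity of T restricted to K
  have hsqprod : ∀ (g : Fin d → ℝ), (∀ i, 0 ≤ g i) →
      (∏ i, Real.sqrt (g i))^2 = ∏ i, g i := by
    intro g hg
    rw [← Finset.prod_pow]
    exact Finset.prod_congr rfl fun i _ => Real.sq_sqrt (hg i)
  have hTinj : Function.Injective (fun x : K => T x.1) := by
    rintro ⟨lam, hlamA, hlamM⟩ ⟨lam', hA', hM'⟩ hTeq
    apply Subtype.ext
    refine antitone_eq_of_interp d hc lam lam' hlamM hM' ?_
    intro j
    induction j using Fin.cases with
    | zero => simp
    | succ k =>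
      have hk : T lam k = T lam' k := congrFun hTeq k
      have hprodeq : ∏ i, (1 + 2 * τ k * lam i) = ∏ i, (1 + 2 * τ k * lam' i) := by
        rw [hT] at hk
        simp only at hk
        rw [Finset.prod_inv_distrib, Finset.prod_inv_distrib] at hk
        have hk2 := inv_injective hk
        have e1 := hsqprod (fun i => 1 + 2 * τ k * lam i)
          (fun i => (h1pos k (lam i) (hbound lam hlamA i)).le)
        have e2 := hsqprod (fun i => 1 + 2 * τ k * lam' i)
          (fun i => (h1pos k (lam' i) (hbound lam' hA' i)).le)
        rw [← e1, ← e2, hk2]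
      have hval : ((Fin.succ k : Fin (d+1)) : ℕ) = (k:ℕ) + 1 := Fin.val_succ k
      rw [hval]
      have hshape : ∀ f : Fin d → ℝ, ∏ i, (2 * f i * ((((k:ℕ):ℝ) + 1) * c) + 1)
          = ∏ i, (1 + 2 * τ k * f i) := by
        intro f
        refine Finset.prod_congr rfl fun i _ => ?_
        rw [hτ]
        ring
      push_cast
      rw [hshape lam, hshape lam', hprodeq]
  -- Tietze extension
  have hScont : Continuous (fun x : K => S x.1) :=
    ContinuousOn.restrict (hS.mono Set.inter_subset_left)
  have hembed : Topology.IsClosedEmbedding (fun x : K => T x.1) :=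
    hTrc.isClosedEmbedding hTinj
  obtain ⟨φcm, hφcm⟩ := ContinuousMap.exists_extension hembed
    ⟨fun x : K => S x.1, hScont⟩
  have hφval : ∀ x : K, φcm (T x.1) = S x.1 := by
    intro x
    exact DFunLike.congr_fun hφcm x
  -- assemble
  refine ⟨d, hd, le_refl d, φcm, fun ℓ => fun s => Real.exp (-(2 * τ ℓ * s)),
    fun _ => gaussMeasure d, φcm.continuous, ?_, fun _ => gaussMeasure_prob d, ?_⟩
  · intro ℓ
    exact Real.continuous_exp.comp (by fun_prop)
  · intro H hH lam hanti ⟨σ, hσ⟩ hmem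
    have heig : ∀ i, hH.eigenvalues i = lam (σ.symm i) := by
      intro i
      rw [hσ (σ.symm i), Equiv.apply_symm_apply]
    have heigbd : ∀ i, |hH.eigenvalues i| ≤ R := by
      intro i
      rw [heig i]
      exact hbound lam hmem _
    have hcalc : (fun ℓ => ∫ v, Real.exp (-(2 * τ ℓ * (v ⬝ᵥ H.mulVec v / 2)))
        ∂(gaussMeasure d)) = T lam := by
      funext ℓ
      have hint1 : ∫ v, Real.exp (-(2 * τ ℓ * (v ⬝ᵥ H.mulVec v / 2))) ∂(gaussMeasure d)
          = ∫ v, Real.exp (-(τ ℓ * (v ⬝ᵥ H.mulVec v))) ∂(gaussMeasure d) := by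
        have hfun : (fun v : Fin d → ℝ => Real.exp (-(2 * τ ℓ * (v ⬝ᵥ H.mulVec v / 2))))
            = fun v => Real.exp (-(τ ℓ * (v ⬝ᵥ H.mulVec v))) := by
          funext v; congr 1; ring
        rw [hfun]
      rw [hint1, gauss_integral_exp_quadratic d H hH (τ ℓ)
        (fun i => hτpos ℓ (hH.eigenvalues i) (heigbd i))]
      have hperm : ∏ i, (Real.sqrt (1 + 2 * τ ℓ * hH.eigenvalues i))⁻¹
          = ∏ i, (Real.sqrt (1 + 2 * τ ℓ * hH.eigenvalues (σ i)))⁻¹ :=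
        (Equiv.prod_comp σ (fun i => (Real.sqrt (1 + 2 * τ ℓ * hH.eigenvalues i))⁻¹)).symm
      rw [hperm, hT]
      exact Finset.prod_congr rfl fun i _ => by rw [← hσ i]
    rw [hcalc]
    exact (hφval ⟨lam, hmem, hanti⟩).symm
end

section
/- Let d ≥ 1. For every continuous function S : ℝ^{d×d} → ℝ there exist a positive integer m ≤ d(d+1)/2, Borel probability measures μ₁, …, μ_m on ℝ^d, and continuous functions φ : ℝ^m → ℝ and ψ₁, …, ψ_m : ℝ → ℝ such that for every real symmetric d×d matrix H, S(H) = φ( ∫ ψ₁(½ vᵀHv) dμ₁(v), …, ∫ ψ_m(½ vᵀHv) dμ_m(v) ). -/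
open MeasureTheory Matrix

noncomputable def sym2vec (d : ℕ) : Sym2 (Fin d) → (Fin d → ℝ) :=
  Sym2.lift ⟨fun i j => Pi.single i 1 + Pi.single j 1, fun i j => add_comm _ _⟩

lemma sym2vec_quad {d : ℕ} (H : Matrix (Fin d) (Fin d) ℝ) (i j : Fin d) :
    (sym2vec d s(i, j)) ⬝ᵥ H.mulVec (sym2vec d s(i, j)) = H i i + H i j + H j i + H j j := by
  have h : sym2vec d s(i, j) = Pi.single i 1 + Pi.single j 1 := rfl
  rw [h, Matrix.mulVec_add, Matrix.mulVec_single, Matrix.mulVec_single,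
    add_dotProduct, dotProduct_add, dotProduct_add,
    single_dotProduct, single_dotProduct, single_dotProduct,
    single_dotProduct]
  simp [mul_comm]
  ring

/-- **Universality of the (φ,ψ,μ)-sharpness measures for arbitrary functions of the Hessian.**
Let `d ≥ 1`.  For every continuous `S : ℝ^{d×d} → ℝ` there exist
`1 ≤ m ≤ d(d+1)/2`, Borel probability measures `μ₁, …, μ_m` on `ℝ^d` and continuous
functions `φ : ℝ^m → ℝ`, `ψ₁, …, ψ_m : ℝ → ℝ` such that for every real symmetric
`d × d` matrix `H`, `S H = φ (∫ ψ₁(½ vᵀHv) dμ₁, …, ∫ ψ_m(½ vᵀHv) dμ_m)`. -/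
theorem universality_matrix_sharpness
    (d : ℕ) (hd : 1 ≤ d) (S : Matrix (Fin d) (Fin d) ℝ → ℝ) (hS : Continuous S) :
    ∃ (m : ℕ), 1 ≤ m ∧ m ≤ d * (d + 1) / 2 ∧
      ∃ (μ : Fin m → Measure (Fin d → ℝ)) (φ : (Fin m → ℝ) → ℝ) (ψ : Fin m → ℝ → ℝ),
        (∀ ℓ, IsProbabilityMeasure (μ ℓ)) ∧
        Continuous φ ∧ (∀ ℓ, Continuous (ψ ℓ)) ∧
        ∀ (H : Matrix (Fin d) (Fin d) ℝ), H.IsHermitian →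
          S H = φ (fun ℓ => ∫ v, ψ ℓ (v ⬝ᵥ H.mulVec v / 2) ∂(μ ℓ)) := by
  set m := d * (d + 1) / 2 with hm
  have hcard : Fintype.card (Sym2 (Fin d)) = m := by
    rw [Sym2.card, Fintype.card_fin, Nat.choose_two_right, hm, Nat.add_sub_cancel, Nat.mul_comm]
  have e : Fin m ≃ Sym2 (Fin d) := (Fintype.equivFinOfCardEq hcard).symm
  have hm1 : 1 ≤ m := by
    have : 0 < Fintype.card (Sym2 (Fin d)) := Fintype.card_pos_iff.mpr
      ⟨s(⟨0, hd⟩, ⟨0, hd⟩)⟩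
    omega
  refine ⟨m, hm1, le_refl _, fun ℓ => Measure.dirac (sym2vec d (e ℓ)),
    fun x => S (fun i j =>
      if i = j then x (e.symm s(i, i)) / 2
      else x (e.symm s(i, j)) - x (e.symm s(i, i)) / 4 - x (e.symm s(j, j)) / 4),
    fun _ => id, fun ℓ => inferInstance, ?_, fun ℓ => continuous_id, ?_⟩
  · apply hS.comp
    apply continuous_pi; intro i; apply continuous_pi; intro j
    by_cases h : i = j <;> simp only [h, if_true, if_false] <;> fun_prop
  · intro H hH
    have hsymm : ∀ i j, H j i = H i j := by
      intro i j
      have := congrFun (congrFun hH.eq j) i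
      simpa [Matrix.conjTranspose_apply] using this.symm
    have hint : ∀ ℓ : Fin m,
        (∫ v, id (v ⬝ᵥ H.mulVec v / 2) ∂(Measure.dirac (sym2vec d (e ℓ))))
          = (sym2vec d (e ℓ)) ⬝ᵥ H.mulVec (sym2vec d (e ℓ)) / 2 := by
      intro ℓ
      exact integral_dirac _ _
    simp only [hint]
    congr 1
    funext i j
    have key : ∀ p q : Fin d,
        sym2vec d (e (e.symm s(p, q))) ⬝ᵥ H.mulVec (sym2vec d (e (e.symm s(p, q))))
          = H p p + H p q + H q p + H q q := by
      intro p q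
      rw [Equiv.apply_symm_apply]
      exact sym2vec_quad H p q
    by_cases h : i = j
    · subst h
      simp only [if_true, key i i]
      ring
    · simp only [h, if_false, key, hsymm i j]
      ring
end

section
/- Let L : ℝ^d → ℝ be twice continuously differentiable and scale-invariant, meaning L(Dx) = L(x) for every x ∈ ℝ^d and every invertible diagonal matrix D ∈ ℝ^{d×d} with det(D) = 1. Let f : ℝ → [0,∞) be measurable and let μ be the Borel measure on ℝ^d with density v ↦ f(∏_{i=1}^d v_i) with respect to Lebesgue measure. Let φ, ψ : ℝ → ℝ be continuous and define S(x) := φ( ∫ ψ(½ vᵀ ∇²L(x) v) dμ(v) ) at every x for which the integrand is μ-integrable. Then for every invertible diagonal D with det(D) = 1 and every x at which S is defined, S(Dx) is defined and S(Dx) = S(x). -/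
open MeasureTheory Matrix

/-- **Scale-invariant (φ,ψ,μ)-sharpness measures.**
If `L : ℝ^d → ℝ` is `C²` and scale-invariant (invariant under every invertible diagonal
matrix of determinant one), and `μ` is the Borel measure with density
`v ↦ f (∏ i, v i)` with respect to Lebesgue measure (`f ≥ 0` measurable), then for all
continuous `φ, ψ`, the sharpness measure `S x = φ (∫ ψ(½ vᵀ ∇²L(x) v) dμ(v))` satisfies:
for every such diagonal `D` and every `x` where the integrand is `μ`-integrable, the
integrand at `Dx` is `μ`-integrable and `S (Dx) = S x`.
Here `½ vᵀ ∇²L(x) v` is expressed via the second iterated derivative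
`iteratedFDeriv ℝ 2 L x ![v, v] / 2`. -/
theorem scale_invariant_sharpness
    (d : ℕ) (L : (Fin d → ℝ) → ℝ) (hL : ContDiff ℝ 2 L)
    (hinv : ∀ (c : Fin d → ℝ), (∀ i, c i ≠ 0) → (∏ i, c i) = 1 →
      ∀ x, L ((Matrix.diagonal c).mulVec x) = L x)
    (f : ℝ → ℝ) (hf : Measurable f) (hf0 : ∀ t, 0 ≤ f t)
    (μ : Measure (Fin d → ℝ))
    (hμ : μ = volume.withDensity (fun v => ENNReal.ofReal (f (∏ i, v i))))
    (φ ψ : ℝ → ℝ) (hφ : Continuous φ) (hψ : Continuous ψ) :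
    ∀ (c : Fin d → ℝ), (∀ i, c i ≠ 0) → (∏ i, c i) = 1 →
      ∀ x : Fin d → ℝ,
        Integrable (fun v => ψ (iteratedFDeriv ℝ 2 L x ![v, v] / 2)) μ →
        Integrable (fun v =>
            ψ (iteratedFDeriv ℝ 2 L ((Matrix.diagonal c).mulVec x) ![v, v] / 2)) μ ∧
        φ (∫ v, ψ (iteratedFDeriv ℝ 2 L ((Matrix.diagonal c).mulVec x) ![v, v] / 2) ∂μ)
          = φ (∫ v, ψ (iteratedFDeriv ℝ 2 L x ![v, v] / 2) ∂μ) := by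
  intro c hc hc1 x hint
  classical
  set c' : Fin d → ℝ := fun i => (c i)⁻¹ with hc'def
  have hcc' : (fun i => c i * c' i) = (1 : Fin d → ℝ) := by
    funext i; simp [hc'def, mul_inv_cancel₀ (hc i)]
  have hc'c : (fun i => c' i * c i) = (1 : Fin d → ℝ) := by
    funext i; simp [hc'def, inv_mul_cancel₀ (hc i)]
  set A : (Fin d → ℝ) →ₗ[ℝ] (Fin d → ℝ) := Matrix.mulVecLin (diagonal c) with hA
  set A' : (Fin d → ℝ) →ₗ[ℝ] (Fin d → ℝ) := Matrix.mulVecLin (diagonal c') with hA'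
  have hAA' : A.comp A' = LinearMap.id := by
    apply LinearMap.ext; intro v; funext i
    simp [hA, hA', Matrix.mulVecLin_apply, Matrix.mulVec_diagonal, hc'def,
      mul_inv_cancel_left₀ (hc i)]
  have hA'A : A'.comp A = LinearMap.id := by
    apply LinearMap.ext; intro v; funext i
    simp [hA, hA', Matrix.mulVecLin_apply, Matrix.mulVec_diagonal, hc'def,
      inv_mul_cancel_left₀ (hc i)]
  set E : (Fin d → ℝ) ≃ₗ[ℝ] (Fin d → ℝ) := LinearEquiv.ofLinear A A' hAA' hA'A with hE
  set Ec : (Fin d → ℝ) ≃L[ℝ] (Fin d → ℝ) := E.toContinuousLinearEquiv with hEc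
  have hEapp : ∀ v, Ec v = (diagonal c).mulVec v := fun v => rfl
  -- determinant
  have hdet : LinearMap.det A = 1 := by
    rw [hA, ← Matrix.toLin'_apply', LinearMap.det_toLin', det_diagonal, hc1]
  -- map of Lebesgue
  have hvol : Measure.map (⇑A) volume = volume := by
    rw [Real.map_linearMap_volume_pi_eq_smul_volume_pi (by rw [hdet]; norm_num), hdet]
    simp
  -- map of μ
  have hmeasA : Measurable (⇑A) := A.toContinuousLinearMap.continuous.measurable
  have hρmeas : Measurable (fun v : Fin d → ℝ => ENNReal.ofReal (f (∏ i, v i))) := by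
    exact (hf.comp (by measurability)).ennreal_ofReal
  have hρcomp : ∀ v, (∏ i, (A v) i) = ∏ i, v i := by
    intro v
    have : ∀ i, (A v) i = c i * v i := by
      intro i; simp [hA, Matrix.mulVecLin_apply, Matrix.mulVec_diagonal]
    simp only [this]
    rw [Finset.prod_mul_distrib, hc1, one_mul]
  have hmap : Measure.map (⇑A) μ = μ := by
    rw [hμ]
    ext s hs
    rw [Measure.map_apply hmeasA hs, withDensity_apply _ (hmeasA hs),
      withDensity_apply _ hs]
    have h4 := MeasureTheory.setLIntegral_map (μ := volume) hs hρmeas hmeasA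
    rw [hvol] at h4
    rw [h4]
    apply setLIntegral_congr_fun (hmeasA hs)
    exact fun v _ => by simp only [hρcomp v]
  have hmp : MeasurePreserving (⇑A) μ μ := ⟨hmeasA, hmap⟩
  have hemb : MeasurableEmbedding (⇑A) :=
    Ec.toHomeomorph.measurableEmbedding
  -- Hessian identity: H_x[v,v] = H_{Dx}[Dv,Dv]
  have hLcomp : L ∘ ⇑A.toContinuousLinearMap = L := by
    funext v
    exact hinv c hc hc1 v
  have hHess : ∀ v, iteratedFDeriv ℝ 2 L x ![v, v]
      = iteratedFDeriv ℝ 2 L ((diagonal c).mulVec x) ![A v, A v] := by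
    intro v
    have h1 := ContinuousLinearMap.iteratedFDeriv_comp_right A.toContinuousLinearMap hL x
      (i := 2) le_rfl
    rw [hLcomp] at h1
    have h3 : (fun i : Fin 2 => A.toContinuousLinearMap (![v, v] i)) = ![A v, A v] := by
      funext i; fin_cases i <;> rfl
    calc iteratedFDeriv ℝ 2 L x ![v, v]
        = ((iteratedFDeriv ℝ 2 L (A.toContinuousLinearMap x)).compContinuousLinearMap
            fun _ => A.toContinuousLinearMap) ![v, v] := by rw [← h1]
      _ = iteratedFDeriv ℝ 2 L (A.toContinuousLinearMap x)
            (fun i : Fin 2 => A.toContinuousLinearMap (![v, v] i)) := by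
          rw [ContinuousMultilinearMap.compContinuousLinearMap_apply]
      _ = iteratedFDeriv ℝ 2 L ((diagonal c).mulVec x) ![A v, A v] := by rw [h3]; rfl
  -- conclusion
  set g : (Fin d → ℝ) → ℝ :=
    fun v => ψ (iteratedFDeriv ℝ 2 L ((diagonal c).mulVec x) ![v, v] / 2) with hg
  have hfun : (fun v => ψ (iteratedFDeriv ℝ 2 L x ![v, v] / 2)) = g ∘ ⇑A := by
    funext v
    simp only [hg, Function.comp_apply, hHess v]
  rw [hfun] at hint
  have hintg : Integrable g μ := (hmp.integrable_comp_emb hemb).mp hint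
  have hinteq : ∫ v, g (A v) ∂μ = ∫ v, g v ∂μ := hmp.integral_comp hemb g
  refine ⟨hintg, ?_⟩
  congr 1
  rw [hfun]
  exact (hinteq).symm
end

section
/- Let L : ℝ^d → ℝ be three times continuously differentiable with sup_y ‖D³L(y)‖ ≤ M < ∞, and let x ∈ ℝ^d satisfy ∇L(x) = 0. Let ψ : ℝ → ℝ be Lipschitz with constant K, and let μ be a Borel measure on ℝ^d with ∫ ‖v‖₂³ dμ(v) < ∞ such that v ↦ ψ(½ vᵀ ∇²L(x) v) is μ-integrable. Then for every ρ > 0 the function v ↦ ψ( ρ^{−2}( L(x + ρv) − L(x) ) ) is μ-integrable and | ∫ ψ( ρ^{−2}( L(x + ρv) − L(x) ) ) dμ(v) − ∫ ψ(½ vᵀ ∇²L(x) v) dμ(v) | ≤ K (M/6) ρ ∫ ‖v‖₂³ dμ(v); in particular the left-hand side tends to 0 as ρ → 0⁺. -/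
open MeasureTheory

section aux

variable {E F : Type*} [NormedAddCommGroup E] [NormedSpace ℝ E]
  [NormedAddCommGroup F] [NormedSpace ℝ F]

lemma my_fderiv_shift (g : E → F) (x z : E) :
    fderiv ℝ (fun w => g (x + w)) z = fderiv ℝ g (x + z) := by
  by_cases h : DifferentiableAt ℝ g (x + z)
  · have h1 : HasFDerivAt (fun w : E => x + w) (ContinuousLinearMap.id ℝ E) z :=
      (hasFDerivAt_id z).const_add x
    have h2 := (h.hasFDerivAt.comp z h1)
    have h3 := h2.fderiv
    simp only [ContinuousLinearMap.comp_id] at h3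
    exact h3
  · have h2 : ¬ DifferentiableAt ℝ (fun w => g (x + w)) z := by
      intro hc
      have hc' : DifferentiableAt ℝ (fun w => g (x + w)) (x + z - x) := by simpa using hc
      have h3 : DifferentiableAt ℝ ((fun w => g (x + w)) ∘ (fun u : E => u - x)) (x + z) :=
        hc'.comp (x + z) ((differentiable_id.sub_const x).differentiableAt)
      have h4 : ((fun w => g (x + w)) ∘ (fun u : E => u - x)) = g := by
        funext u; simp [Function.comp]
      rw [h4] at h3
      exact h h3
    rw [fderiv_zero_of_not_differentiableAt h, fderiv_zero_of_not_differentiableAt h2]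

lemma my_iteratedFDeriv_shift (g : E → F) (x : E) (i : ℕ) :
    iteratedFDeriv ℝ i (fun z => g (x + z)) = fun z => iteratedFDeriv ℝ i g (x + z) := by
  induction i with
  | zero => funext z; ext m; simp [iteratedFDeriv_zero_apply]
  | succ n IH =>
    funext z; ext m
    rw [iteratedFDeriv_succ_apply_left, iteratedFDeriv_succ_apply_left, IH,
      my_fderiv_shift (iteratedFDeriv ℝ n g) x z]

end aux

lemma my_iteratedDeriv_line {d : ℕ} (L : EuclideanSpace ℝ (Fin d) → ℝ) (hL : ContDiff ℝ 3 L)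
    (x u : EuclideanSpace ℝ (Fin d)) (i : ℕ) (hi : (i : WithTop ℕ∞) ≤ 3) (t : ℝ) :
    iteratedDeriv i (fun s : ℝ => L (x + s • u)) t
      = iteratedFDeriv ℝ i L (x + t • u) (fun _ => u) := by
  have hL' : ContDiff ℝ 3 (fun z => L (x + z)) := hL.comp (contDiff_const.add contDiff_id)
  have hcomp : (fun s : ℝ => L (x + s • u))
      = (fun z => L (x + z)) ∘ (ContinuousLinearMap.toSpanSingleton ℝ u) := by
    funext s; simp [Function.comp, ContinuousLinearMap.toSpanSingleton_apply]
  rw [iteratedDeriv_eq_iteratedFDeriv, hcomp,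
    ContinuousLinearMap.iteratedFDeriv_comp_right _ hL' t hi]
  rw [ContinuousMultilinearMap.compContinuousLinearMap_apply, my_iteratedFDeriv_shift L x i]
  simp [ContinuousLinearMap.toSpanSingleton_apply]

lemma my_iDW_eq {g : ℝ → ℝ} (hg : ContDiff ℝ 3 g) {s : Set ℝ} (hs : UniqueDiffOn ℝ s)
    {t : ℝ} (ht : t ∈ s) (n : ℕ) (hn : (n : ℕ∞) ≤ 3) :
    iteratedDerivWithin n g s t = iteratedDeriv n g t := by
  rw [iteratedDerivWithin_eq_iteratedFDerivWithin, iteratedDeriv_eq_iteratedFDeriv]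
  congr 1
  have hg' : ContDiff ℝ (3 : ℕ∞) g := by exact_mod_cast hg
  have h1 : HasFTaylorSeriesUpTo (3 : ℕ∞) g (ftaylorSeries ℝ g) :=
    contDiff_iff_ftaylorSeries.mp hg'
  exact ((h1.hasFTaylorSeriesUpToOn s).eq_iteratedFDerivWithin_of_uniqueDiffOn
    (by exact_mod_cast hn) hs ht).symm

lemma my_taylor_bound {d : ℕ} (L : EuclideanSpace ℝ (Fin d) → ℝ) (hL : ContDiff ℝ 3 L)
    (M : ℝ) (hM : ∀ y, ‖iteratedFDeriv ℝ 3 L y‖ ≤ M)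
    (x : EuclideanSpace ℝ (Fin d)) (hfd : fderiv ℝ L x = 0)
    (u : EuclideanSpace ℝ (Fin d)) :
    |L (x + u) - L x - iteratedFDeriv ℝ 2 L x (fun _ => u) / 2| ≤ M / 6 * ‖u‖ ^ 3 := by
  set g : ℝ → ℝ := fun s => L (x + s • u) with hgdef
  have hg : ContDiff ℝ 3 g := by
    apply hL.comp
    exact contDiff_const.add (contDiff_id.smul contDiff_const)
  have hud : UniqueDiffOn ℝ (Set.Icc (0:ℝ) 1) := uniqueDiffOn_Icc one_pos
  have hf : ContDiffOn ℝ 2 g (Set.Icc (0:ℝ) 1) :=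
    (hg.of_le (by norm_num)).contDiffOn
  have hf' : DifferentiableOn ℝ (iteratedDerivWithin 2 g (Set.Icc (0:ℝ) 1)) (Set.Ioo (0:ℝ) 1) := by
    intro t ht
    have hd : DifferentiableAt ℝ (iteratedDeriv 2 g) t :=
      (hg.differentiable_iteratedDeriv 2 (by norm_num)).differentiableAt
    refine (hd.differentiableWithinAt).congr (fun y hy => ?_) ?_
    · exact my_iDW_eq hg hud (Set.mem_Icc_of_Ioo hy) 2 (by norm_num)
    · exact my_iDW_eq hg hud (Set.mem_Icc_of_Ioo ht) 2 (by norm_num)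
  obtain ⟨c, hc, hTay⟩ := taylor_mean_remainder_lagrange (f := g) (n := 2) (x₀ := 0) (x := 1)
    zero_ne_one (by rw [Set.uIcc_of_le zero_le_one]; exact_mod_cast hf)
    (by rw [Set.uIcc_of_le zero_le_one, Set.uIoo_of_le zero_le_one]; intro t ht; exact hf' t ht)
  rw [Set.uIoo_of_le zero_le_one] at hc
  rw [Set.uIcc_of_le zero_le_one] at hTay
  have e0 : iteratedDerivWithin 0 g (Set.Icc (0:ℝ) 1) 0 = L x := by
    rw [my_iDW_eq hg hud (Set.left_mem_Icc.2 zero_le_one) 0 (by norm_num)]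
    simp [hgdef]
  have e1 : iteratedDerivWithin 1 g (Set.Icc (0:ℝ) 1) 0 = 0 := by
    rw [my_iDW_eq hg hud (Set.left_mem_Icc.2 zero_le_one) 1 (by norm_num),
      my_iteratedDeriv_line L hL x u 1 (by norm_num)]
    simp [iteratedFDeriv_one_apply, hfd]
  have e2 : iteratedDerivWithin 2 g (Set.Icc (0:ℝ) 1) 0
      = iteratedFDeriv ℝ 2 L x (fun _ => u) := by
    rw [my_iDW_eq hg hud (Set.left_mem_Icc.2 zero_le_one) 2 (by norm_num),
      my_iteratedDeriv_line L hL x u 2 (by norm_num)]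
    simp
  have e3 : iteratedDerivWithin 3 g (Set.Icc (0:ℝ) 1) c
      = iteratedFDeriv ℝ 3 L (x + c • u) (fun _ => u) := by
    rw [my_iDW_eq hg hud (Set.mem_Icc_of_Ioo hc) 3 (by norm_num),
      my_iteratedDeriv_line L hL x u 3 (by norm_num)]
  have etay : taylorWithinEval g 2 (Set.Icc (0:ℝ) 1) 0 1
      = L x + iteratedFDeriv ℝ 2 L x (fun _ => u) / 2 := by
    rw [taylor_within_apply]
    rw [Finset.sum_range_succ, Finset.sum_range_succ, Finset.sum_range_one]
    rw [e0, e1, e2]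
    norm_num
    ring
  have hg1 : g 1 = L (x + u) := by simp [hgdef]
  rw [etay, hg1] at hTay
  have hbound : |iteratedFDeriv ℝ 3 L (x + c • u) (fun _ => u)| ≤ M * ‖u‖ ^ 3 := by
    have h1 := (iteratedFDeriv ℝ 3 L (x + c • u)).le_opNorm (fun _ => u)
    have h2 : (∏ _i : Fin 3, ‖u‖) = ‖u‖ ^ 3 := by
      simp [Finset.prod_const]
    rw [h2] at h1
    calc |iteratedFDeriv ℝ 3 L (x + c • u) (fun _ => u)|
        ≤ ‖iteratedFDeriv ℝ 3 L (x + c • u)‖ * ‖u‖ ^ 3 := h1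
      _ ≤ M * ‖u‖ ^ 3 := mul_le_mul_of_nonneg_right (hM _) (by positivity)
  have : L (x + u) - L x - iteratedFDeriv ℝ 2 L x (fun _ => u) / 2
      = iteratedFDeriv ℝ 3 L (x + c • u) (fun _ => u) / 6 := by
    rw [show L (x + u) - L x - iteratedFDeriv ℝ 2 L x (fun _ => u) / 2
      = L (x + u) - (L x + iteratedFDeriv ℝ 2 L x (fun _ => u) / 2) by ring, hTay, e3]
    norm_num [Nat.factorial]
  rw [this, abs_div]
  rw [show |(6:ℝ)| = 6 by norm_num]
  rw [div_le_iff₀ (by norm_num : (0:ℝ) < 6)]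
  calc |iteratedFDeriv ℝ 3 L (x + c • u) (fun _ => u)| ≤ M * ‖u‖ ^ 3 := hbound
    _ = M / 6 * ‖u‖ ^ 3 * 6 := by ring

/-- **Convergence of the sharpness regularizer to the sharpness measure.**
Let `L : ℝ^d → ℝ` be `C³` with `‖D³L(y)‖ ≤ M` for all `y`, and `x` with `∇L(x) = 0`.
Let `ψ` be `K`-Lipschitz and `μ` a Borel measure with `∫ ‖v‖₂³ dμ < ∞` such that
`v ↦ ψ(½ vᵀ∇²L(x)v)` is `μ`-integrable.  Then for each `ρ > 0` the function
`v ↦ ψ(ρ⁻²(L(x+ρv) − L(x)))` is `μ`-integrable and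
`|∫ ψ(ρ⁻²(L(x+ρv) − L(x))) dμ − ∫ ψ(½ vᵀ∇²L(x)v) dμ| ≤ K (M/6) ρ ∫ ‖v‖₂³ dμ`;
in particular the left-hand side tends to `0` as `ρ → 0⁺`. -/
theorem sharpness_regularizer_convergence
    (d : ℕ) (L : EuclideanSpace ℝ (Fin d) → ℝ) (hL : ContDiff ℝ 3 L)
    (M : ℝ) (hM : ∀ y, ‖iteratedFDeriv ℝ 3 L y‖ ≤ M)
    (x : EuclideanSpace ℝ (Fin d)) (hx : gradient L x = 0)
    (ψ : ℝ → ℝ) (K : NNReal) (hψ : LipschitzWith K ψ)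
    (μ : Measure (EuclideanSpace ℝ (Fin d)))
    (hμ3 : Integrable (fun v => ‖v‖ ^ 3) μ)
    (hint : Integrable (fun v => ψ (iteratedFDeriv ℝ 2 L x ![v, v] / 2)) μ) :
    (∀ ρ : ℝ, 0 < ρ →
      Integrable (fun v => ψ ((L (x + ρ • v) - L x) / ρ ^ 2)) μ ∧
      |(∫ v, ψ ((L (x + ρ • v) - L x) / ρ ^ 2) ∂μ)
          - ∫ v, ψ (iteratedFDeriv ℝ 2 L x ![v, v] / 2) ∂μ|
        ≤ (K : ℝ) * (M / 6) * ρ * ∫ v, ‖v‖ ^ 3 ∂μ) ∧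
    Filter.Tendsto
      (fun ρ : ℝ => |(∫ v, ψ ((L (x + ρ • v) - L x) / ρ ^ 2) ∂μ)
          - ∫ v, ψ (iteratedFDeriv ℝ 2 L x ![v, v] / 2) ∂μ|)
      (nhdsWithin 0 (Set.Ioi 0)) (nhds 0) := by
  have hfd : fderiv ℝ L x = 0 := by
    have := hx
    rw [show gradient L x = (InnerProductSpace.toDual ℝ _).symm (fderiv ℝ L x) from rfl] at this
    simpa using (InnerProductSpace.toDual ℝ (EuclideanSpace ℝ (Fin d))).symm.map_eq_zero_iff.mp this
  have hvv : ∀ v : EuclideanSpace ℝ (Fin d), (![v, v] : Fin 2 → _) = fun _ => v := by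
    intro v; funext i; fin_cases i <;> rfl
  have key : ∀ ρ : ℝ, 0 < ρ → ∀ v : EuclideanSpace ℝ (Fin d),
      |(L (x + ρ • v) - L x) / ρ ^ 2 - iteratedFDeriv ℝ 2 L x ![v, v] / 2|
        ≤ M / 6 * ρ * ‖v‖ ^ 3 := by
    intro ρ hρ v
    have h1 := my_taylor_bound L hL M hM x hfd (ρ • v)
    have h2 : iteratedFDeriv ℝ 2 L x (fun _ => ρ • v)
        = ρ ^ 2 * iteratedFDeriv ℝ 2 L x ![v, v] := by
      rw [hvv v]
      have := (iteratedFDeriv ℝ 2 L x).map_smul_univ (fun _ : Fin 2 => ρ) (fun _ => v)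
      simpa [Finset.prod_const] using this
    rw [h2] at h1
    have h3 : ‖ρ • v‖ ^ 3 = ρ ^ 3 * ‖v‖ ^ 3 := by
      rw [norm_smul, Real.norm_eq_abs, abs_of_pos hρ, mul_pow]
    rw [h3] at h1
    have hρ2 : (0:ℝ) < ρ ^ 2 := by positivity
    have h4 : (L (x + ρ • v) - L x) / ρ ^ 2 - iteratedFDeriv ℝ 2 L x ![v, v] / 2
        = (L (x + ρ • v) - L x - ρ ^ 2 * iteratedFDeriv ℝ 2 L x ![v, v] / 2) / ρ ^ 2 := by
      rw [eq_div_iff hρ2.ne', sub_mul, div_mul_cancel₀ _ hρ2.ne']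
      ring
    rw [h4, abs_div, abs_of_pos hρ2, div_le_iff₀ hρ2]
    calc |L (x + ρ • v) - L x - ρ ^ 2 * iteratedFDeriv ℝ 2 L x ![v, v] / 2|
        ≤ M / 6 * (ρ ^ 3 * ‖v‖ ^ 3) := h1
      _ = M / 6 * ρ * ‖v‖ ^ 3 * ρ ^ 2 := by ring
  have keyψ : ∀ ρ : ℝ, 0 < ρ → ∀ v : EuclideanSpace ℝ (Fin d),
      |ψ ((L (x + ρ • v) - L x) / ρ ^ 2) - ψ (iteratedFDeriv ℝ 2 L x ![v, v] / 2)|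
        ≤ (K : ℝ) * (M / 6) * ρ * ‖v‖ ^ 3 := by
    intro ρ hρ v
    have h1 := hψ.dist_le_mul ((L (x + ρ • v) - L x) / ρ ^ 2)
      (iteratedFDeriv ℝ 2 L x ![v, v] / 2)
    rw [Real.dist_eq, Real.dist_eq] at h1
    calc |ψ ((L (x + ρ • v) - L x) / ρ ^ 2) - ψ (iteratedFDeriv ℝ 2 L x ![v, v] / 2)|
        ≤ (K : ℝ) * |(L (x + ρ • v) - L x) / ρ ^ 2 - iteratedFDeriv ℝ 2 L x ![v, v] / 2| := h1
      _ ≤ (K : ℝ) * (M / 6 * ρ * ‖v‖ ^ 3) :=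
          mul_le_mul_of_nonneg_left (key ρ hρ v) K.coe_nonneg
      _ = (K : ℝ) * (M / 6) * ρ * ‖v‖ ^ 3 := by ring
  have main : ∀ ρ : ℝ, 0 < ρ →
      Integrable (fun v => ψ ((L (x + ρ • v) - L x) / ρ ^ 2)) μ ∧
      |(∫ v, ψ ((L (x + ρ • v) - L x) / ρ ^ 2) ∂μ)
          - ∫ v, ψ (iteratedFDeriv ℝ 2 L x ![v, v] / 2) ∂μ|
        ≤ (K : ℝ) * (M / 6) * ρ * ∫ v, ‖v‖ ^ 3 ∂μ := by
    intro ρ hρ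
    set f : EuclideanSpace ℝ (Fin d) → ℝ := fun v => ψ ((L (x + ρ • v) - L x) / ρ ^ 2) with hf
    set h : EuclideanSpace ℝ (Fin d) → ℝ :=
      fun v => ψ (iteratedFDeriv ℝ 2 L x ![v, v] / 2) with hh
    have hfc : Continuous f := by
      apply hψ.continuous.comp
      exact ((hL.continuous.comp (by fun_prop : Continuous fun v : EuclideanSpace ℝ (Fin d) => x + ρ • v)).sub continuous_const).div_const _
    have hdiff : Integrable (fun v => f v - h v) μ := by
      refine Integrable.mono' ((hμ3.const_mul ((K : ℝ) * (M / 6) * ρ))) ?_ ?_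
      · exact (hfc.aestronglyMeasurable).sub hint.1
      · filter_upwards with v
        rw [Real.norm_eq_abs]
        exact keyψ ρ hρ v
    have hfint : Integrable f μ := by
      have h5 := hdiff.add hint
      have h6 : ((fun v => f v - h v) + h) = f := by funext v; simp
      rwa [h6] at h5
    refine ⟨hfint, ?_⟩
    rw [← integral_sub hfint hint]
    calc |∫ v, (f v - h v) ∂μ| ≤ ∫ v, |f v - h v| ∂μ := by
          simpa [Real.norm_eq_abs] using norm_integral_le_integral_norm (fun v => f v - h v) (μ := μ)
      _ ≤ ∫ v, (K : ℝ) * (M / 6) * ρ * ‖v‖ ^ 3 ∂μ := by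
          apply integral_mono hdiff.abs (hμ3.const_mul _)
          intro v
          exact keyψ ρ hρ v
      _ = (K : ℝ) * (M / 6) * ρ * ∫ v, ‖v‖ ^ 3 ∂μ := by
          rw [integral_const_mul]
  refine ⟨main, ?_⟩
  apply squeeze_zero'
  · filter_upwards with ρ using abs_nonneg _
  · filter_upwards [self_mem_nhdsWithin] with ρ hρ
    exact (main ρ hρ).2
  · have : Filter.Tendsto (fun ρ : ℝ => (K : ℝ) * (M / 6) * ρ * ∫ v, ‖v‖ ^ 3 ∂μ)
        (nhds 0) (nhds 0) := by
      have hc : Continuous (fun ρ : ℝ => (K : ℝ) * (M / 6) * ρ * ∫ v, ‖v‖ ^ 3 ∂μ) := by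
        continuity
      have := hc.tendsto 0
      simpa using this
    exact this.mono_left nhdsWithin_le_nhds
end
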